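/- With Σ(z,ζ,q) := ∑_{n∈ℤ} (−1)^n ζ^{2n} q^{n²+2n}/(1 − z²q^{2n}), P(z,q) := ∏_{r≥1}(1 − zq^{r−1})(1 − z^{−1}q^r), and g(z,q) := −P(z⁴,q²)P(−1,q)/( P(−z²,q) P(z²q²,q²) ) · Σ(z,1,q) − z⁴ Σ(z²,z,q) − ∑'_{n∈ℤ} (−1)^n z^{−2n} q^{n(n+2)}/(1 − q^{2n}) (the last sum omitting n = 0), for complex q with 0 < |q| < 1 and complex z for which all expressions are defined, one has g(z,q) + g(z^{−1}q,q) = 0. -/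

import Mathlib

noncomputable section

/-- The infinite q-Pochhammer symbol `(a; q)_∞ = ∏_{k ≥ 0} (1 - a q^k)`. -/
def qPochInf (a q : ℂ) : ℂ := ∏' k : ℕ, (1 - a * q ^ k)

/-- The finite q-Pochhammer symbol `(a; q)_n = ∏_{k = 0}^{n-1} (1 - a q^k)`. -/
def qPochFin (a q : ℂ) (n : ℕ) : ℂ := ∏ k ∈ Finset.range n, (1 - a * q ^ k)

/-- An overpartition of `n`: a partition of `n` together with a set of part sizes
whose first occurrence is overlined. -/
structure Overpartition (n : ℕ) where
  toPartition : Nat.Partition n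
  overlined : Finset ℕ
  overlined_subset : overlined ⊆ toPartition.parts.toFinset

namespace Overpartition

variable {n : ℕ}

/-- The largest part `ℓ(λ)` (zero for the empty overpartition). -/
def largestPart (μ : Overpartition n) : ℕ := μ.toPartition.parts.sup

/-- The number of parts `n(λ)`. -/
def numParts (μ : Overpartition n) : ℕ := Multiset.card μ.toPartition.parts

/-- The number of odd non-overlined parts `n(λ_o)`. -/
def numOddNonOverlined (μ : Overpartition n) : ℕ :=
  Multiset.card (μ.toPartition.parts.filter (fun m => Odd m))
    - (μ.overlined.filter (fun m => Odd m)).card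

/-- `χ(λ) = 1` if the largest part of `λ` is odd and non-overlined, `0` otherwise. -/
def chi (μ : Overpartition n) : ℕ :=
  if Odd μ.largestPart ∧ μ.largestPart ∉ μ.overlined then 1 else 0

/-- The M₂-rank `⌈ℓ(λ)/2⌉ - n(λ) + n(λ_o) - χ(λ)` of an overpartition. -/
def m2Rank (μ : Overpartition n) : ℤ :=
  (((μ.largestPart + 1) / 2 : ℕ) : ℤ) - (μ.numParts : ℤ)
    + (μ.numOddNonOverlined : ℤ) - (μ.chi : ℤ)

/-- The (Dyson) rank of an overpartition: largest part minus number of parts. -/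
def rank (μ : Overpartition n) : ℤ := (μ.largestPart : ℤ) - (μ.numParts : ℤ)

end Overpartition

/-- `N̄₂(s, m, n)`: the number of overpartitions of `n` whose M₂-rank is `≡ s (mod m)`. -/
def N2bar (s m n : ℕ) : ℕ :=
  Nat.card {μ : Overpartition n // μ.m2Rank ≡ (s : ℤ) [ZMOD (m : ℤ)]}

/-- `N̄(s, m, n)`: the number of overpartitions of `n` whose rank is `≡ s (mod m)`. -/
def Nbar (s m n : ℕ) : ℕ :=
  Nat.card {μ : Overpartition n // μ.rank ≡ (s : ℤ) [ZMOD (m : ℤ)]}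

/-- `P(z, q) = ∏_{r ≥ 1} (1 - z q^{r-1})(1 - z⁻¹ q^r)`. -/
def Pprod (z q : ℂ) : ℂ := ∏' r : ℕ, ((1 - z * q ^ r) * (1 - z⁻¹ * q ^ (r + 1)))

/-- `Σ(z, ζ, q) = ∑_{n ∈ ℤ} (-1)^n ζ^{2n} q^{n²+2n} / (1 - z² q^{2n})`. -/
def SigmaSum (z ζ q : ℂ) : ℂ :=
  ∑' n : ℤ, (-1 : ℂ) ^ n * ζ ^ (2 * n) * q ^ (n ^ 2 + 2 * n) / (1 - z ^ 2 * q ^ (2 * n))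

/-- The function `g(z, q)` of Lemma 3.2. -/
def gFun (z q : ℂ) : ℂ :=
  -(Pprod (z ^ 4) (q ^ 2) * Pprod (-1) q / (Pprod (-(z ^ 2)) q * Pprod (z ^ 2 * q ^ 2) (q ^ 2)))
      * SigmaSum z 1 q
    - z ^ 4 * SigmaSum (z ^ 2) z q
    - ∑' n : {m : ℤ // m ≠ 0},
        (-1 : ℂ) ^ (n : ℤ) * z ^ (-2 * (n : ℤ)) * q ^ ((n : ℤ) * ((n : ℤ) + 2))
          / (1 - q ^ (2 * (n : ℤ)))

/-- The universal mock theta function `g₂(x, q)`. -/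
def g2fun (x q : ℂ) : ℂ :=
  qPochInf (-q) q / qPochInf q q *
    ∑' n : ℤ, (-1 : ℂ) ^ n * q ^ (n * (n + 1)) / (1 - x * q ^ n)

/-- The universal mock theta function `g₃(x, q)`. -/
def g3fun (x q : ℂ) : ℂ :=
  (1 / qPochInf q q) *
    ∑' n : ℤ, (-1 : ℂ) ^ n * q ^ (3 * n * (n + 1) / 2) / (1 - x * q ^ n)

/-!
Under `z ↦ q / z` each of the three summands of `g` changes sign.  Writing
`P(x, Q) = (x; Q)_∞ (Q / x; Q)_∞` gives the symmetry `P(Q / x, Q) = P(x, Q)` and the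
quasi-periodicity `P(x Q, Q) = -x⁻¹ P(x, Q)`, so the quotient of products in front of
`Σ(z, 1, q)` gets multiplied by `-q / z²`, while `Σ(q / z, 1, q) = (z² / q) Σ(z, 1, q)`.
For the two other bilateral sums the substitutions `n ↦ -2 - n` and `n ↦ -n` turn every term
at `q / z` into minus the corresponding term at `z`.  In each case the reindexed numerator and
denominator are nonzero multiples `A a`, `B b` of the old ones, and `A a / (B b) = (A / B) (a / b)`
holds even where `b = 0`.
-/

theorem multipliable_one_sub_mul_pow (a q : ℂ) (hq : ‖q‖ < 1) :
    Multipliable fun r : ℕ => 1 - a * q ^ r := by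
  simp_rw [sub_eq_add_neg]
  refine multipliable_one_add_of_summable ?_
  simpa [norm_mul, norm_pow] using
    (summable_geometric_of_lt_one (norm_nonneg q) hq).mul_left ‖a‖

theorem qPochInf_eq_one_sub_mul (a q : ℂ) (hq : ‖q‖ < 1) :
    qPochInf a q = (1 - a) * qPochInf (a * q) q := by
  rw [qPochInf, qPochInf, tprod_eq_zero_mul' (f := fun k => 1 - a * q ^ k)]
  · simp [pow_succ, mul_assoc, mul_comm q]
  · simpa [pow_succ, mul_assoc, mul_comm q] using multipliable_one_sub_mul_pow (a * q) q hq

theorem Pprod_eq_qPochInf_mul (x q : ℂ) (hq : ‖q‖ < 1) :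
    Pprod x q = qPochInf x q * qPochInf (x⁻¹ * q) q := by
  rw [Pprod, qPochInf, qPochInf, ← (multipliable_one_sub_mul_pow x q hq).tprod_mul
    (multipliable_one_sub_mul_pow (x⁻¹ * q) q hq)]
  simp only [pow_succ', mul_assoc]

theorem Pprod_inv_mul_self (x q : ℂ) (hq0 : q ≠ 0) (hq : ‖q‖ < 1) :
    Pprod (x⁻¹ * q) q = Pprod x q := by
  rw [Pprod_eq_qPochInf_mul _ _ hq, Pprod_eq_qPochInf_mul _ _ hq, mul_inv, inv_inv,
    inv_mul_cancel_right₀ hq0, mul_comm]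

theorem Pprod_mul_self (x q : ℂ) (hx : x ≠ 0) (hq0 : q ≠ 0) (hq : ‖q‖ < 1) :
    Pprod (x * q) q = -x⁻¹ * Pprod x q := by
  rw [Pprod_eq_qPochInf_mul _ _ hq, Pprod_eq_qPochInf_mul _ _ hq, mul_inv,
    inv_mul_cancel_right₀ hq0, qPochInf_eq_one_sub_mul x⁻¹ q hq,
    qPochInf_eq_one_sub_mul x q hq]
  field_simp
  ring

theorem Pprod_inv_mul_mul_self (x q : ℂ) (hx : x ≠ 0) (hq0 : q ≠ 0) (hq : ‖q‖ < 1) :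
    Pprod (x⁻¹ * q * q) q = -(x * q⁻¹) * Pprod x q := by
  rw [Pprod_mul_self _ _ (by simp [hx, hq0]) hq0 hq, Pprod_inv_mul_self _ _ hq0 hq, mul_inv,
    inv_inv]

theorem tsum_eq_mul_tsum_of_equiv {α β K : Type*} [DivisionRing K] [TopologicalSpace K]
    [IsTopologicalRing K] [T2Space K] {f : α → K} {g : β → K} (e : β ≃ α) (c : K)
    (h : ∀ n, f (e n) = c * g n) : ∑' n, f n = c * ∑' n, g n := by
  rw [← e.tsum_eq, ← tsum_mul_left]
  exact tsum_congr h

theorem neg_one_zpow_sub {K : Type*} [DivisionRing K] (k n : ℤ) :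
    (-1 : K) ^ (k - n) = (-1) ^ k * (-1) ^ n := by
  rw [← zpow_add₀ (by norm_num), sub_eq_add_neg, zpow_add₀ (by norm_num),
    zpow_add₀ (by norm_num), ← inv_zpow', inv_neg_one]

theorem SigmaSum_inv_mul_one (q z : ℂ) (hq0 : q ≠ 0) (hz : z ≠ 0) :
    SigmaSum (z⁻¹ * q) 1 q = z ^ 2 * q⁻¹ * SigmaSum z 1 q := by
  refine tsum_eq_mul_tsum_of_equiv (Equiv.subLeft (-1)) _ fun n => ?_
  simp only [Equiv.subLeft_apply, one_zpow, mul_one]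
  have hnum : (-1 : ℂ) ^ (-1 - n) * q ^ ((-1 - n) ^ 2 + 2 * (-1 - n)) =
      -(q ^ (2 * n) * q)⁻¹ * ((-1 : ℂ) ^ n * q ^ (n ^ 2 + 2 * n)) := by
    rw [show (-1 - n) ^ 2 + 2 * (-1 - n) = (n ^ 2 + 2 * n) - (2 * n + 1) by ring,
      zpow_sub₀ hq0, zpow_add_one₀ hq0, neg_one_zpow_sub]
    ring
  have hden : 1 - (z⁻¹ * q) ^ 2 * q ^ (2 * (-1 - n)) =
      -(z ^ 2 * q ^ (2 * n))⁻¹ * (1 - z ^ 2 * q ^ (2 * n)) := by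
    rw [show 2 * (-1 - n) = -(2 * n) - 2 by ring, zpow_sub₀ hq0, zpow_neg]
    field_simp
    ring
  have hu : q ^ (2 * n) ≠ 0 := zpow_ne_zero _ hq0
  rw [hnum, hden, mul_div_mul_comm]
  field_simp

theorem SigmaSum_sq_inv_mul (q z : ℂ) (hq0 : q ≠ 0) (hz : z ≠ 0) :
    (z⁻¹ * q) ^ 4 * SigmaSum ((z⁻¹ * q) ^ 2) (z⁻¹ * q) q =
      -(z ^ 4 * SigmaSum (z ^ 2) z q) := by
  suffices h :
      SigmaSum ((z⁻¹ * q) ^ 2) (z⁻¹ * q) q = -(z ^ 8 / q ^ 4) * SigmaSum (z ^ 2) z q by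
    rw [h]
    field_simp
  refine tsum_eq_mul_tsum_of_equiv (Equiv.subLeft (-2)) _ fun n => ?_
  simp only [Equiv.subLeft_apply]
  have hnum :
      (-1 : ℂ) ^ (-2 - n) * (z⁻¹ * q) ^ (2 * (-2 - n)) * q ^ ((-2 - n) ^ 2 + 2 * (-2 - n)) =
        z ^ 4 * (q ^ (2 * n) * q ^ 4)⁻¹ *
          ((-1 : ℂ) ^ n * z ^ (2 * n) * q ^ (n ^ 2 + 2 * n)) := by
    rw [show (-2 - n) ^ 2 + 2 * (-2 - n) = n ^ 2 + 2 * n by ring, neg_one_zpow_sub,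
      (even_neg.2 even_two).neg_one_zpow, mul_zpow, inv_zpow',
      show -(2 * (-2 - n)) = 2 * n + 4 by ring, zpow_add₀ hz,
      show 2 * (-2 - n) = -(2 * n) - 4 by ring, zpow_sub₀ hq0, zpow_neg]
    field_simp
  have hden : 1 - ((z⁻¹ * q) ^ 2) ^ 2 * q ^ (2 * (-2 - n)) =
      -(z ^ 4 * q ^ (2 * n))⁻¹ * (1 - (z ^ 2) ^ 2 * q ^ (2 * n)) := by
    rw [show 2 * (-2 - n) = -(2 * n) - 4 by ring, zpow_sub₀ hq0, zpow_neg]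
    field_simp
    ring
  have hu : q ^ (2 * n) ≠ 0 := zpow_ne_zero _ hq0
  rw [hnum, hden, mul_div_mul_comm]
  field_simp

theorem tsum_ne_zero_inv_mul (q z : ℂ) (hq0 : q ≠ 0) :
    ∑' n : {m : ℤ // m ≠ 0},
        (-1 : ℂ) ^ (n : ℤ) * (z⁻¹ * q) ^ (-2 * (n : ℤ)) * q ^ ((n : ℤ) * ((n : ℤ) + 2))
          / (1 - q ^ (2 * (n : ℤ)))
      = -∑' n : {m : ℤ // m ≠ 0},
        (-1 : ℂ) ^ (n : ℤ) * z ^ (-2 * (n : ℤ)) * q ^ ((n : ℤ) * ((n : ℤ) + 2))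
          / (1 - q ^ (2 * (n : ℤ))) := by
  have hterm (n : ℤ) :
      (-1 : ℂ) ^ (-n) * (z⁻¹ * q) ^ (-2 * -n) * q ^ (-n * (-n + 2)) / (1 - q ^ (2 * -n)) =
        -1 * ((-1 : ℂ) ^ n * z ^ (-2 * n) * q ^ (n * (n + 2)) / (1 - q ^ (2 * n))) := by
    have hu : q ^ (2 * n) ≠ 0 := zpow_ne_zero _ hq0
    have hnum : (-1 : ℂ) ^ (-n) * (z⁻¹ * q) ^ (-2 * -n) * q ^ (-n * (-n + 2)) =
        (q ^ (2 * n))⁻¹ * ((-1 : ℂ) ^ n * z ^ (-2 * n) * q ^ (n * (n + 2))) := by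
      rw [show -n * (-n + 2) = n * (n + 2) - 2 * n - 2 * n by ring, zpow_sub₀ hq0,
        zpow_sub₀ hq0, show -2 * -n = 2 * n by ring, mul_zpow, inv_zpow', ← inv_zpow',
        inv_neg_one, show -(2 * n) = -2 * n by ring]
      field_simp
    have hden : 1 - q ^ (2 * -n) = -(q ^ (2 * n))⁻¹ * (1 - q ^ (2 * n)) := by
      rw [mul_neg, zpow_neg]
      field_simp
      ring
    rw [hnum, hden, mul_div_mul_comm]
    field_simp
  exact (tsum_eq_mul_tsum_of_equiv ((Equiv.neg ℤ).subtypeEquiv (p := (· ≠ 0)) (q := (· ≠ 0))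
    fun _ => neg_ne_zero.symm) (-1 : ℂ) fun n => hterm n).trans (neg_one_mul _)

theorem stmt17_general (q z : ℂ) (hq0 : q ≠ 0) (hq : ‖q‖ < 1) (hz : z ≠ 0) :
    gFun z q + gFun (z⁻¹ * q) q = 0 := by
  have hq2 : ‖q ^ 2‖ < 1 := by simpa using pow_lt_one₀ (norm_nonneg q) hq two_ne_zero
  have hq20 : q ^ 2 ≠ 0 := pow_ne_zero 2 hq0
  have hz2 : z ^ 2 ≠ 0 := pow_ne_zero 2 hz
  have hA : Pprod ((z⁻¹ * q) ^ 4) (q ^ 2) = -(z ^ 4 * (q ^ 2)⁻¹) * Pprod (z ^ 4) (q ^ 2) := by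
    rw [show (z⁻¹ * q) ^ 4 = (z ^ 4)⁻¹ * q ^ 2 * q ^ 2 by ring,
      Pprod_inv_mul_mul_self _ _ (pow_ne_zero 4 hz) hq20 hq2]
  have hB : Pprod (-((z⁻¹ * q) ^ 2)) q = z ^ 2 * q⁻¹ * Pprod (-(z ^ 2)) q := by
    rw [show -((z⁻¹ * q) ^ 2) = (-(z ^ 2))⁻¹ * q * q by ring,
      Pprod_inv_mul_mul_self _ _ (neg_ne_zero.2 hz2) hq0 hq]
    ring
  have hC : Pprod ((z⁻¹ * q) ^ 2 * q ^ 2) (q ^ 2) =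
      z ^ 4 * (q ^ 2)⁻¹ * Pprod (z ^ 2 * q ^ 2) (q ^ 2) := by
    rw [Pprod_mul_self _ _ hz2 hq20 hq2,
      show (z⁻¹ * q) ^ 2 * q ^ 2 = (z ^ 2)⁻¹ * q ^ 2 * q ^ 2 by ring,
      Pprod_inv_mul_mul_self _ _ hz2 hq20 hq2]
    field_simp
  rw [gFun, gFun, hA, hB, hC, SigmaSum_inv_mul_one q z hq0 hz, SigmaSum_sq_inv_mul q z hq0 hz,
    tsum_ne_zero_inv_mul q z hq0]
  field_simp
  ring

theorem stmt17 (q z : ℂ) (hq0 : q ≠ 0) (hq : ‖q‖ < 1) (hz : z ≠ 0)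
    (hd2 : ∀ n : ℤ, 1 - z ^ 2 * q ^ (2 * n) ≠ 0)
    (hd4 : ∀ n : ℤ, 1 - z ^ 4 * q ^ (2 * n) ≠ 0)
    (hP1 : Pprod (-(z ^ 2)) q ≠ 0) (hP2 : Pprod (z ^ 2 * q ^ 2) (q ^ 2) ≠ 0)
    (hP3 : Pprod (-((z⁻¹ * q) ^ 2)) q ≠ 0)
    (hP4 : Pprod ((z⁻¹ * q) ^ 2 * q ^ 2) (q ^ 2) ≠ 0) :
    gFun z q + gFun (z⁻¹ * q) q = 0 :=
  stmt17_general q z hq0 hq hz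

end
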